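/- arXiv:1808.09317 — 8 statements merged into one kernel-verified Lean document; each statement's English description precedes it below -/
import Mathlib

section
/- Let f be a generalized degree function on a finite type V that has bounded removal loss at S*. If S* is a nonempty finset of V maximizing the generalized density ρ over all nonempty finsets of V, then every vertex v ∈ S* satisfies f S* v ≥ ρ(S*). -/
/-- If `S*` is a nonempty finset maximizing the generalized density over all
nonempty finsets, and the generalized degree function `f` has bounded removal
loss at `S*`, then every vertex of `S*` has generalized degree at least the
density of `S*`. -/
theorem degree_ge_density_at_optimum
    {V : Type*} [Fintype V] [DecidableEq V]
    (f : Finset V → V → ℝ)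
    (hnonneg : ∀ (S : Finset V) (v : V), 0 ≤ f S v)
    (hmono : ∀ (S T : Finset V), S ⊆ T → ∀ v : V, f S v ≤ f T v)
    (Sstar : Finset V) (hne : Sstar.Nonempty)
    (hloss : ∀ v ∈ Sstar,
      (∑ u ∈ Sstar, f Sstar u) - (∑ u ∈ Sstar.erase v, f (Sstar.erase v) u)
        ≤ 2 * f Sstar v)
    (hopt : ∀ S : Finset V, S.Nonempty →
      (∑ v ∈ S, f S v) / (2 * S.card) ≤ (∑ v ∈ Sstar, f Sstar v) / (2 * Sstar.card)) :
    ∀ v ∈ Sstar, f Sstar v ≥ (∑ u ∈ Sstar, f Sstar u) / (2 * Sstar.card) := by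
  intro v hv
  set n : ℝ := (Sstar.card : ℝ) with hn
  have hnpos : (0:ℝ) < n := by
    rw [hn]; exact_mod_cast Finset.card_pos.mpr hne
  set ρ : ℝ := (∑ u ∈ Sstar, f Sstar u) / (2 * n) with hρ
  have hρnonneg : 0 ≤ ρ := by
    apply div_nonneg (Finset.sum_nonneg fun u _ => hnonneg _ _)
    positivity
  have hsum : ∑ u ∈ Sstar, f Sstar u = ρ * (2 * n) := by
    rw [hρ, div_mul_cancel₀]
    positivity
  have hcardE : ((Sstar.erase v).card : ℝ) = n - 1 := by
    rw [Finset.card_erase_of_mem hv, hn]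
    have h1 : 1 ≤ Sstar.card := Finset.card_pos.mpr hne
    push_cast [Nat.cast_sub h1]
    ring
  have herase : ∑ u ∈ Sstar.erase v, f (Sstar.erase v) u ≤ ρ * (2 * (n - 1)) := by
    rcases (Sstar.erase v).eq_empty_or_nonempty with h | h
    · have hn1 : n - 1 = 0 := by
        rw [← hcardE, h]; simp
      rw [h, hn1]
      simp
    · have := hopt (Sstar.erase v) h
      rw [hcardE] at this
      have hpos : (0:ℝ) < 2 * (n - 1) := by
        have : (0:ℝ) < ((Sstar.erase v).card : ℝ) := by
          exact_mod_cast Finset.card_pos.mpr h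
        rw [hcardE] at this; linarith
      calc ∑ u ∈ Sstar.erase v, f (Sstar.erase v) u
          = (∑ u ∈ Sstar.erase v, f (Sstar.erase v) u) / (2 * (n-1)) * (2 * (n-1)) := by
            rw [div_mul_cancel₀]; positivity
        _ ≤ ρ * (2 * (n - 1)) := by
            apply mul_le_mul_of_nonneg_right this (le_of_lt hpos)
  have hl := hloss v hv
  rw [hsum] at hl
  have : 2 * ρ ≤ 2 * f Sstar v := by nlinarith
  show (∑ u ∈ Sstar, f Sstar u) / (2 * n) ≤ f Sstar v
  rw [← hρ]; linarith
end

section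
/- Greedy peeling is a 1/2-approximation for maximizing generalized density. Let f be a generalized degree function on a finite type V, and let S* be a nonempty finset maximizing the generalized density ρ over all nonempty finsets, with f having bounded removal loss at S*. Let T : ℕ → Finset V and v : ℕ → V satisfy: T 0 = Finset.univ, and for every i with T i nonempty, v i ∈ T i, f (T i) (v i) ≤ f (T i) u for all u ∈ T i, and T (i+1) = (T i).erase (v i). Then there exists an index i such that T i is nonempty and 2 * ρ(T i) ≥ ρ(S*). -/
/-!
Every vertex `w` of an optimal set `S*` has degree at least `ρ(S*)`: removing `w` loses at most
`2 f S* w` of the total degree, while by optimality `S* \ {w}` keeps at most `2 (|S*| - 1) ρ(S*)`.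
Peeling starts from `univ`, so there is a first step `i` at which a vertex of `S*` is removed;
then `S* ⊆ T i`, and by monotonicity and minimality every degree in `T i` is at least
`f S* (v i) ≥ ρ(S*)`, whence `2 ρ(T i) ≥ ρ(S*)`.
-/

open Finset

namespace GreedyPeeling

variable {V : Type*}

noncomputable def density (f : Finset V → V → ℝ) (S : Finset V) : ℝ :=
  (∑ v ∈ S, f S v) / (2 * #S)

theorem sum_eq_two_mul_card_mul_density {f : Finset V → V → ℝ} {S : Finset V}
    (hS : S.Nonempty) : ∑ v ∈ S, f S v = 2 * #S * density f S := by
  have : (0 : ℝ) < #S := by exact_mod_cast hS.card_pos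
  rw [density, mul_div_cancel₀]
  positivity

theorem sum_le_two_mul_card_mul_density_of_isMax {f : Finset V → V → ℝ} {Sstar : Finset V}
    (hopt : ∀ S : Finset V, S.Nonempty → density f S ≤ density f Sstar) (S : Finset V) :
    ∑ v ∈ S, f S v ≤ 2 * #S * density f Sstar := by
  rcases S.eq_empty_or_nonempty with rfl | hS
  · simp
  · rw [sum_eq_two_mul_card_mul_density hS]
    gcongr
    exact hopt S hS

theorem density_le_of_isMax_of_removal_loss_le [DecidableEq V] {f : Finset V → V → ℝ}
    {Sstar : Finset V} (hopt : ∀ S : Finset V, S.Nonempty → density f S ≤ density f Sstar)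
    {w : V} (hw : w ∈ Sstar)
    (hloss : (∑ u ∈ Sstar, f Sstar u) - (∑ u ∈ Sstar.erase w, f (Sstar.erase w) u)
      ≤ 2 * f Sstar w) :
    density f Sstar ≤ f Sstar w := by
  have hsum := sum_eq_two_mul_card_mul_density (f := f) ⟨w, hw⟩
  have herase := sum_le_two_mul_card_mul_density_of_isMax hopt (Sstar.erase w)
  have hcard : (#(Sstar.erase w) : ℝ) = #Sstar - 1 := by
    rw [card_erase_of_mem hw, Nat.cast_pred (card_pos.mpr ⟨w, hw⟩)]
  rw [hcard] at herase
  linarith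

theorem le_two_mul_density_of_le_degree {f : Finset V → V → ℝ} {S : Finset V}
    (hS : S.Nonempty) {c : ℝ} (hc : ∀ u ∈ S, c ≤ f S u) : c ≤ 2 * density f S := by
  have hpos : (0 : ℝ) < #S := by exact_mod_cast hS.card_pos
  have hsum : #S * c ≤ ∑ u ∈ S, f S u := by
    simpa only [nsmul_eq_mul] using card_nsmul_le_sum S (f S) c hc
  rw [density, mul_div_assoc', mul_div_mul_left _ _ two_ne_zero, le_div_iff₀ hpos]
  linarith

section Peeling

variable [DecidableEq V] {T : ℕ → Finset V} {v : ℕ → V}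

theorem card_add_le_of_peel
    (hstep : ∀ i, (T i).Nonempty → v i ∈ T i ∧ T (i + 1) = (T i).erase (v i))
    {n : ℕ} (hne : ∀ j < n, (T j).Nonempty) : #(T n) + n ≤ #(T 0) := by
  induction n with
  | zero => simp
  | succ n ih =>
    obtain ⟨hv, heq⟩ := hstep n (hne n n.lt_succ_self)
    have hlt : #(T (n + 1)) < #(T n) := heq ▸ card_erase_lt_of_mem hv
    have := ih fun j hj => hne j (hj.trans n.lt_succ_self)
    omega

theorem exists_subset_peel_of_mem [Fintype V] (hT0 : T 0 = univ)
    (hstep : ∀ i, (T i).Nonempty → v i ∈ T i ∧ T (i + 1) = (T i).erase (v i))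
    {S : Finset V} (hS : S.Nonempty) : ∃ i, S ⊆ T i ∧ v i ∈ S := by
  have hleave : ∃ n, ¬ S ⊆ T n := by
    by_contra! hsub
    have hcard := card_add_le_of_peel hstep (n := Fintype.card V) fun j _ => hS.mono (hsub j)
    rw [hT0, card_univ] at hcard
    have := (hS.mono (hsub (Fintype.card V))).card_pos
    omega
  obtain ⟨i, hin, hout⟩ :=
    Nat.exists_not_and_succ_of_not_zero_of_exists (by simp [hT0]) hleave
  rw [not_not] at hin
  rw [(hstep i (hS.mono hin)).2, subset_erase, not_and, not_not] at hout
  exact ⟨i, hin, hout hin⟩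

end Peeling

end GreedyPeeling

open GreedyPeeling in
theorem greedy_peeling_half_approximation_general
    {V : Type*} [Fintype V] [DecidableEq V]
    (f : Finset V → V → ℝ)
    (hmono : ∀ (S T : Finset V), S ⊆ T → ∀ v : V, f S v ≤ f T v)
    (Sstar : Finset V) (hne : Sstar.Nonempty)
    (hloss : ∀ v ∈ Sstar,
      (∑ u ∈ Sstar, f Sstar u) - (∑ u ∈ Sstar.erase v, f (Sstar.erase v) u)
        ≤ 2 * f Sstar v)
    (hopt : ∀ S : Finset V, S.Nonempty →
      (∑ v ∈ S, f S v) / (2 * S.card) ≤ (∑ v ∈ Sstar, f Sstar v) / (2 * Sstar.card))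
    (T : ℕ → Finset V) (v : ℕ → V)
    (hT0 : T 0 = Finset.univ)
    (hstep : ∀ i : ℕ, (T i).Nonempty →
      v i ∈ T i ∧ (∀ u ∈ T i, f (T i) (v i) ≤ f (T i) u) ∧
      T (i + 1) = (T i).erase (v i)) :
    ∃ i : ℕ, (T i).Nonempty ∧
      2 * ((∑ u ∈ T i, f (T i) u) / (2 * (T i).card))
        ≥ (∑ u ∈ Sstar, f Sstar u) / (2 * Sstar.card) := by
  obtain ⟨i, hsub, hvi⟩ := exists_subset_peel_of_mem hT0
    (fun i hi => ⟨(hstep i hi).1, (hstep i hi).2.2⟩) hne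
  have hTi : (T i).Nonempty := hne.mono hsub
  have hdeg : ∀ u ∈ T i, density f Sstar ≤ f (T i) u := fun u hu =>
    calc density f Sstar ≤ f Sstar (v i) :=
          density_le_of_isMax_of_removal_loss_le hopt hvi (hloss _ hvi)
      _ ≤ f (T i) (v i) := hmono _ _ hsub _
      _ ≤ f (T i) u := (hstep i hTi).2.1 u hu
  exact ⟨i, hTi, le_two_mul_density_of_le_degree hTi hdeg⟩

/-- Greedy peeling is a 1/2-approximation for maximizing the generalized
density: along the peeling sequence `T 0 = univ`, `T (i+1) = (T i).erase (v i)`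
where `v i` minimizes the generalized degree in `T i`, some nonempty `T i`
has density at least half the optimum. -/
theorem greedy_peeling_half_approximation
    {V : Type*} [Fintype V] [DecidableEq V]
    (f : Finset V → V → ℝ)
    (hnonneg : ∀ (S : Finset V) (v : V), 0 ≤ f S v)
    (hmono : ∀ (S T : Finset V), S ⊆ T → ∀ v : V, f S v ≤ f T v)
    (Sstar : Finset V) (hne : Sstar.Nonempty)
    (hloss : ∀ v ∈ Sstar,
      (∑ u ∈ Sstar, f Sstar u) - (∑ u ∈ Sstar.erase v, f (Sstar.erase v) u)
        ≤ 2 * f Sstar v)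
    (hopt : ∀ S : Finset V, S.Nonempty →
      (∑ v ∈ S, f S v) / (2 * S.card) ≤ (∑ v ∈ Sstar, f Sstar v) / (2 * Sstar.card))
    (T : ℕ → Finset V) (v : ℕ → V)
    (hT0 : T 0 = Finset.univ)
    (hstep : ∀ i : ℕ, (T i).Nonempty →
      v i ∈ T i ∧ (∀ u ∈ T i, f (T i) (v i) ≤ f (T i) u) ∧
      T (i + 1) = (T i).erase (v i)) :
    ∃ i : ℕ, (T i).Nonempty ∧
      2 * ((∑ u ∈ T i, f (T i) u) / (2 * (T i).card))
        ≥ (∑ u ∈ Sstar, f Sstar u) / (2 * Sstar.card) :=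
  greedy_peeling_half_approximation_general f hmono Sstar hne hloss hopt T v hT0 hstep
end

section
/- Sparsified candidate lists preserve near-optimal last intervals. Fix a natural number i ≥ 1 and a real δ ≥ 0. Let g : ℕ → ℝ be non-decreasing and h : ℕ → ℝ be non-increasing. Let A be a finset of natural numbers with A ⊆ {1, …, i}, 1 ∈ A, i ∈ A, and suppose that for any two elements a < a' of A with no element of A strictly between them, either a' = a + 1 or g(a') − g(a) ≤ δ. Then for every b with 1 ≤ b ≤ i there exists a ∈ A with a ≤ b and g(a) + h(a) ≥ g(b) + h(b) − δ. -/
/-- Sparsified candidate lists preserve near-optimal last intervals: if the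
candidate list `A ⊆ {1,…,i}` contains `1` and `i` and consecutive candidates
`a < a'` satisfy `a' = a + 1` or `g a' - g a ≤ δ`, then for every `1 ≤ b ≤ i`
there is a candidate `a ≤ b` with `g a + h a ≥ g b + h b - δ`. -/
theorem sparsified_candidates_near_optimal
    (i : ℕ) (hi : 1 ≤ i) (δ : ℝ) (hδ : 0 ≤ δ)
    (g : ℕ → ℝ) (hg : Monotone g)
    (h : ℕ → ℝ) (hh : Antitone h)
    (A : Finset ℕ)
    (hA : A ⊆ Finset.Icc 1 i) (h1 : 1 ∈ A) (hiA : i ∈ A)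
    (hdense : ∀ a ∈ A, ∀ a' ∈ A, a < a' → (∀ x ∈ A, ¬(a < x ∧ x < a')) →
      a' = a + 1 ∨ g a' - g a ≤ δ) :
    ∀ b : ℕ, 1 ≤ b → b ≤ i →
      ∃ a ∈ A, a ≤ b ∧ g a + h a ≥ g b + h b - δ := by
  intro b hb1 hbi
  by_cases hbA : b ∈ A
  · exact ⟨b, hbA, le_refl b, by linarith⟩
  · -- b ∉ A
    have hb1' : 1 < b := lt_of_le_of_ne hb1 (fun e => hbA (e ▸ h1))
    have hbi' : b < i := lt_of_le_of_ne hbi (fun e => hbA (e ▸ hiA))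
    set S := A.filter (· < b) with hS
    set T := A.filter (b < ·) with hT
    have hSne : S.Nonempty := ⟨1, Finset.mem_filter.2 ⟨h1, hb1'⟩⟩
    have hTne : T.Nonempty := ⟨i, Finset.mem_filter.2 ⟨hiA, hbi'⟩⟩
    set a := S.max' hSne with ha
    set a' := T.min' hTne with ha'
    have haS : a ∈ S := S.max'_mem hSne
    have ha'T : a' ∈ T := T.min'_mem hTne
    have haA : a ∈ A := (Finset.mem_filter.1 haS).1
    have hab : a < b := (Finset.mem_filter.1 haS).2
    have ha'A : a' ∈ A := (Finset.mem_filter.1 ha'T).1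
    have hba' : b < a' := (Finset.mem_filter.1 ha'T).2
    have haa' : a < a' := hab.trans hba'
    have hgap : ∀ x ∈ A, ¬(a < x ∧ x < a') := by
      intro x hx ⟨hax, hxa'⟩
      rcases lt_trichotomy x b with hxb | hxb | hxb
      · exact absurd (S.le_max' x (Finset.mem_filter.2 ⟨hx, hxb⟩)) (not_le.2 hax)
      · exact hbA (hxb ▸ hx)
      · exact absurd (T.min'_le x (Finset.mem_filter.2 ⟨hx, hxb⟩)) (not_le.2 hxa')
    rcases hdense a haA a' ha'A haa' hgap with heq | hle
    · omega
    · refine ⟨a, haA, hab.le, ?_⟩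
      have h1 := hg hba'.le
      have h2 := hh hab.le
      linarith
end

section
/- Approximation guarantee of the sparsified dynamic program. Let k ≥ 1 be a natural number and ε > 0 a real. Let d : ℕ → ℕ → ℝ satisfy d a i ≥ 0 for all a, i. Define the optimal-profit table o : ℕ → ℕ → ℝ by o 0 ℓ = 0 for all ℓ ≥ 1, o i 1 = d 1 i for i ≥ 1, and for ℓ ≥ 2 and i ≥ 1, o i ℓ = max over 1 ≤ b ≤ i of (o (b−1) (ℓ−1) + d b i). Suppose s : ℕ → ℕ → ℝ satisfies: s i ℓ ≥ 0 for all i, ℓ; s 0 ℓ = 0; s i 1 ≥ d 1 i for i ≥ 1; and for every ℓ with 2 ≤ ℓ ≤ k, every i ≥ 1 and every b with 1 ≤ b ≤ i, (1 + ε(ℓ−1)/k) · s i ℓ ≥ (1 + ε(ℓ−1)/k) · (s (b−1) (ℓ−1) + d b i) − (ε/k) · s i ℓ. Then for every i and every ℓ with 1 ≤ ℓ ≤ k, (1 + εℓ/k) · s i ℓ ≥ o i ℓ. -/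
/-- Approximation guarantee of the sparsified dynamic program: if the
approximate table `s` satisfies the per-step inequality with relative loss
`ε/k` at each level `ℓ ≤ k`, then `(1 + εℓ/k) · s i ℓ ≥ o i ℓ` where `o` is
the exact dynamic-programming table. -/
theorem approx_dp_guarantee
    (k : ℕ) (hk : 1 ≤ k) (ε : ℝ) (hε : 0 < ε)
    (d : ℕ → ℕ → ℝ) (hd : ∀ a i : ℕ, 0 ≤ d a i)
    (o : ℕ → ℕ → ℝ)
    (ho0 : ∀ ℓ : ℕ, 1 ≤ ℓ → o 0 ℓ = 0)
    (ho1 : ∀ i : ℕ, 1 ≤ i → o i 1 = d 1 i)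
    (homax : ∀ ℓ : ℕ, 2 ≤ ℓ → ∀ i : ℕ, 1 ≤ i →
      (∀ b : ℕ, 1 ≤ b → b ≤ i → o (b - 1) (ℓ - 1) + d b i ≤ o i ℓ) ∧
      (∃ b : ℕ, 1 ≤ b ∧ b ≤ i ∧ o i ℓ = o (b - 1) (ℓ - 1) + d b i))
    (s : ℕ → ℕ → ℝ)
    (hs0 : ∀ i ℓ : ℕ, 0 ≤ s i ℓ)
    (hsz : ∀ ℓ : ℕ, s 0 ℓ = 0)
    (hs1 : ∀ i : ℕ, 1 ≤ i → s i 1 ≥ d 1 i)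
    (hstep : ∀ ℓ : ℕ, 2 ≤ ℓ → ℓ ≤ k → ∀ i : ℕ, 1 ≤ i → ∀ b : ℕ, 1 ≤ b → b ≤ i →
      (1 + ε * ((ℓ : ℝ) - 1) / k) * s i ℓ
        ≥ (1 + ε * ((ℓ : ℝ) - 1) / k) * (s (b - 1) (ℓ - 1) + d b i)
          - (ε / k) * s i ℓ) :
    ∀ i ℓ : ℕ, 1 ≤ ℓ → ℓ ≤ k → (1 + ε * (ℓ : ℝ) / k) * s i ℓ ≥ o i ℓ := by

  have hk' : (0:ℝ) < k := by exact_mod_cast hk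
  have key : ∀ ℓ : ℕ, 1 ≤ ℓ → ℓ ≤ k → ∀ i : ℕ,
      (1 + ε * (ℓ : ℝ) / k) * s i ℓ ≥ o i ℓ := by
    intro ℓ
    induction ℓ with
    | zero => intro h; omega
    | succ n ih =>
      intro h1 hle i
      have hcoef : (0:ℝ) ≤ ε * (n+1 : ℕ) / k := by
        positivity
      rcases Nat.eq_zero_or_pos n with hn0 | hgt
      · -- n+1 = 1, so n = 0
        subst hn0
        rcases Nat.eq_zero_or_pos i with hi | hi
        · subst hi
          rw [ho0 1 le_rfl, hsz]
          ring_nf; positivity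
        · rw [ho1 i hi]
          have h1' := hs1 i hi
          nlinarith [hs0 i 1, hd 1 i]
      · -- n + 1 ≥ 2
        have hn2 : 2 ≤ n + 1 := by omega
        have hn1 : 1 ≤ n := by omega
        rcases Nat.eq_zero_or_pos i with hi | hi
        · subst hi
          rw [ho0 (n+1) (by omega), hsz]
          have : (0:ℝ) ≤ s 0 (n+1) := hs0 0 (n+1)
          nlinarith [hs0 0 (n+1)]
        · obtain ⟨hub, b, hb1, hbi, hbeq⟩ := homax (n+1) hn2 i hi
          have ihb := ih hn1 (by omega) (b-1)
          have hstep' := hstep (n+1) hn2 hle i hi b hb1 hbi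
          have hsimp : ((n+1 : ℕ) : ℝ) - 1 = (n : ℕ) := by push_cast; ring
          rw [hsimp] at hstep'
          have hred : (n+1) - 1 = n := rfl
          rw [hred] at hstep'
          have hdn : 0 ≤ d b i := hd b i
          have hsn : 0 ≤ s i (n+1) := hs0 i (n+1)
          have hsb : 0 ≤ s (b-1) n := hs0 (b-1) n
          -- o i (n+1) = o (b-1) n + d b i ≤ (1+εn/k) s(b-1)n + (1+εn/k) d b i
          --           ≤ (1+εn/k) s i (n+1) + (ε/k) s i (n+1) = (1+ε(n+1)/k) s i (n+1)
          have hcn : (0:ℝ) ≤ ε * n / k := by positivity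
          rw [hbeq]
          have h2 : (o (b-1) n : ℝ) + d b i ≤ (1 + ε * n / k) * (s (b-1) n + d b i) := by
            nlinarith [ihb]
          have hexp : (1 + ε * ((n:ℝ)+1) / k) * s i (n+1)
              = (1 + ε * (n:ℝ) / k) * s i (n+1) + (ε / k) * s i (n+1) := by ring
          push_cast
          linarith [hstep', h2]
  intro i ℓ h1 h2
  exact key ℓ h1 h2 i
end

section
/- Composition of segmentation and density approximations. Fix naturals r and k ≥ 1. A k-segmentation of {1,…,r} is a non-decreasing map b : Fin (k+1) → ℕ with b 0 = 0 and b k = r, and its score under an interval score function F : ℕ → ℕ → ℝ is ∑_{j=1}^{k} F (b (j−1) + 1) (b j). Let f, g : ℕ → ℕ → ℝ be non-negative interval score functions and c ≥ 1, ε ≥ 0 reals such that g a b ≤ f a b ≤ c · g a b for all a, b. Suppose P is a k-segmentation such that (1 + ε) · score_g(P) ≥ score_g(Q) for every k-segmentation Q. Then for every k-segmentation P*, score_f(P*) ≤ c · (1 + ε) · score_f(P). -/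
/-- A `k`-segmentation of `{1,…,r}` given by non-decreasing boundaries
`b : Fin (k+1) → ℕ` with `b 0 = 0` and `b k = r`. -/
def IsSegmentation (r k : ℕ) (b : Fin (k + 1) → ℕ) : Prop :=
  Monotone b ∧ b 0 = 0 ∧ b (Fin.last k) = r

/-- The score of a segmentation under an interval score function `F`:
`∑_{j=1}^{k} F (b (j-1) + 1) (b j)`. -/
def segScore (k : ℕ) (F : ℕ → ℕ → ℝ) (b : Fin (k + 1) → ℕ) : ℝ :=
  ∑ j : Fin k, F (b j.castSucc + 1) (b j.succ)

/-- Composition of segmentation and density approximations: if `g ≤ f ≤ c·g`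
and `P` is a `(1+ε)`-approximate optimal segmentation for scores `g`, then
`P` is a `c·(1+ε)`-approximate optimal segmentation for scores `f`. -/
theorem segmentation_approximation_composition
    (r k : ℕ) (hk : 1 ≤ k)
    (f g : ℕ → ℕ → ℝ)
    (hf : ∀ a b : ℕ, 0 ≤ f a b) (hg : ∀ a b : ℕ, 0 ≤ g a b)
    (c : ℝ) (hc : 1 ≤ c) (ε : ℝ) (hε : 0 ≤ ε)
    (happrox : ∀ a b : ℕ, g a b ≤ f a b ∧ f a b ≤ c * g a b)
    (P : Fin (k + 1) → ℕ) (hP : IsSegmentation r k P)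
    (hPopt : ∀ Q : Fin (k + 1) → ℕ, IsSegmentation r k Q →
      segScore k g Q ≤ (1 + ε) * segScore k g P) :
    ∀ Pstar : Fin (k + 1) → ℕ, IsSegmentation r k Pstar →
      segScore k f Pstar ≤ c * (1 + ε) * segScore k f P := by
  intro Pstar hPstar
  have h1 : segScore k f Pstar ≤ c * segScore k g Pstar := by
    rw [segScore, segScore, Finset.mul_sum]
    exact Finset.sum_le_sum fun j _ => (happrox _ _).2
  have h2 : segScore k g Pstar ≤ (1 + ε) * segScore k g P := hPopt Pstar hPstar
  have h3 : segScore k g P ≤ segScore k f P :=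
    Finset.sum_le_sum fun j _ => (happrox _ _).1
  have hc0 : 0 ≤ c := le_trans zero_le_one hc
  have hε0 : 0 ≤ 1 + ε := by linarith
  calc segScore k f Pstar ≤ c * segScore k g Pstar := h1
    _ ≤ c * ((1 + ε) * segScore k g P) := by
        exact mul_le_mul_of_nonneg_left h2 hc0
    _ ≤ c * ((1 + ε) * segScore k f P) := by
        have := mul_le_mul_of_nonneg_left h3 hε0
        exact mul_le_mul_of_nonneg_left this hc0
    _ = c * (1 + ε) * segScore k f P := by ring
end

section
/- Correctness of threshold peeling (the Find subroutine). Let f be a generalized degree function on a finite nonempty type V, and let S* be a nonempty finset maximizing the generalized density ρ over all nonempty finsets, with f having bounded removal loss at S*. Let ε ≥ 0 and β > 0 be reals with 2(1 + ε)β ≤ ρ(S*). Define H : ℕ → Finset V by H 0 = Finset.univ and H (t+1) = (H t).filter (fun v => f (H t) v ≥ 2(1 + ε)β). Then: (i) S* ⊆ H t for every t; and (ii) there exists t such that H t is nonempty and ρ(H t) ≥ (1 + ε)β. -/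
open scoped Classical

/-- Correctness of threshold peeling (the `Find` subroutine): if
`2(1+ε)β ≤ ρ(S*)` where `S*` is an optimal nonempty set for the generalized
density and `f` has bounded removal loss at `S*`, then the peeling sequence
`H 0 = univ`, `H (t+1) = {v ∈ H t : f (H t) v ≥ 2(1+ε)β}` always contains
`S*`, and some nonempty `H t` has density at least `(1+ε)β`. -/
theorem threshold_peeling_correctness
    {V : Type*} [Fintype V] [DecidableEq V] [Nonempty V]
    (f : Finset V → V → ℝ)
    (hnonneg : ∀ (S : Finset V) (v : V), 0 ≤ f S v)
    (hmono : ∀ (S T : Finset V), S ⊆ T → ∀ v : V, f S v ≤ f T v)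
    (Sstar : Finset V) (hne : Sstar.Nonempty)
    (hloss : ∀ v ∈ Sstar,
      (∑ u ∈ Sstar, f Sstar u) - (∑ u ∈ Sstar.erase v, f (Sstar.erase v) u)
        ≤ 2 * f Sstar v)
    (hopt : ∀ S : Finset V, S.Nonempty →
      (∑ v ∈ S, f S v) / (2 * S.card) ≤ (∑ v ∈ Sstar, f Sstar v) / (2 * Sstar.card))
    (ε : ℝ) (hε : 0 ≤ ε) (β : ℝ) (hβ : 0 < β)
    (hβopt : 2 * (1 + ε) * β ≤ (∑ v ∈ Sstar, f Sstar v) / (2 * Sstar.card))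
    (H : ℕ → Finset V)
    (hH0 : H 0 = Finset.univ)
    (hHstep : ∀ t : ℕ, H (t + 1) = (H t).filter (fun v => f (H t) v ≥ 2 * (1 + ε) * β)) :
    (∀ t : ℕ, Sstar ⊆ H t) ∧
    (∃ t : ℕ, (H t).Nonempty ∧
      (∑ v ∈ H t, f (H t) v) / (2 * (H t).card) ≥ (1 + ε) * β) := by
  have hcard : (0:ℝ) < (Sstar.card : ℝ) := by exact_mod_cast hne.card_pos
  -- Key claim: every vertex of Sstar has f-value at least the density of Sstar.
  have hkey : ∀ v ∈ Sstar,
      (∑ u ∈ Sstar, f Sstar u) / (2 * Sstar.card) ≤ f Sstar v := by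
    intro v hv
    by_cases h1 : (Sstar.erase v).Nonempty
    · have hc : (Sstar.erase v).card = Sstar.card - 1 := Finset.card_erase_of_mem hv
      have hc1 : 1 ≤ Sstar.card := hne.card_pos
      have hc2 : (0:ℝ) < ((Sstar.erase v).card : ℝ) := by exact_mod_cast h1.card_pos
      have hcast : ((Sstar.erase v).card : ℝ) = (Sstar.card : ℝ) - 1 := by
        rw [hc]; push_cast [hc1]; ring
      have hopt' := hopt _ h1
      have hl := hloss v hv
      have h2 : ((∑ u ∈ Sstar, f Sstar u) - 2 * f Sstar v) / (2 * (Sstar.erase v).card)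
          ≤ (∑ u ∈ Sstar, f Sstar u) / (2 * Sstar.card) := by
        refine le_trans ?_ hopt'
        exact (div_le_div_iff_of_pos_right (by positivity)).mpr (by linarith)
      rw [div_le_div_iff₀ (by positivity) (by positivity)] at h2
      rw [div_le_iff₀ (by positivity)]
      rw [hcast] at h2
      nlinarith [hcard]
    · have h0 : Sstar.erase v = ∅ := Finset.not_nonempty_iff_eq_empty.mp h1
      have hS : Sstar = {v} := by
        rcases (Finset.erase_eq_empty_iff _ _).mp h0 with h | h
        · exact absurd hv (by simp [h])
        · exact h
      subst hS
      simp only [Finset.sum_singleton, Finset.card_singleton, Nat.cast_one, mul_one]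
      have := hnonneg {v} v
      rw [div_le_iff₀ (by norm_num)]
      linarith
  have hkey' : ∀ v ∈ Sstar, 2 * (1 + ε) * β ≤ f Sstar v :=
    fun v hv => le_trans hβopt (hkey v hv)
  have hsub : ∀ t : ℕ, Sstar ⊆ H t := by
    intro t
    induction t with
    | zero => rw [hH0]; exact Finset.subset_univ _
    | succ t ih =>
      rw [hHstep]
      intro v hv
      exact Finset.mem_filter.2 ⟨ih hv, le_trans (hkey' v hv) (hmono _ _ ih v)⟩
  refine ⟨hsub, ?_⟩
  have hstab : ∃ t, H (t + 1) = H t := by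
    by_contra hcon
    push_neg at hcon
    have hdec : ∀ t, (H t).card + t ≤ Fintype.card V := by
      intro t
      induction t with
      | zero => simp [hH0]
      | succ t ih =>
        have hsubt : H (t + 1) ⊆ H t := by rw [hHstep]; exact Finset.filter_subset _ _
        have hlt : (H (t + 1)).card < (H t).card :=
          Finset.card_lt_card (lt_of_le_of_ne hsubt (hcon t))
        omega
    have h1 : 1 ≤ (H (Fintype.card V)).card := (hne.mono (hsub _)).card_pos
    have := hdec (Fintype.card V)
    omega
  obtain ⟨t, heq⟩ := hstab
  refine ⟨t, hne.mono (hsub t), ?_⟩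
  have hall : ∀ v ∈ H t, 2 * (1 + ε) * β ≤ f (H t) v := by
    have : (H t).filter (fun v => f (H t) v ≥ 2 * (1 + ε) * β) = H t :=
      (hHstep t).symm.trans heq
    intro v hv
    have := Finset.filter_eq_self.mp this v hv
    exact this
  have hcardt : (0:ℝ) < ((H t).card : ℝ) := by exact_mod_cast (hne.mono (hsub t)).card_pos
  have hsum : ((H t).card : ℝ) * (2 * (1 + ε) * β) ≤ ∑ v ∈ H t, f (H t) v := by
    calc ((H t).card : ℝ) * (2 * (1 + ε) * β) = ∑ _v ∈ H t, 2 * (1 + ε) * β := by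
          rw [Finset.sum_const, nsmul_eq_mul]
      _ ≤ ∑ v ∈ H t, f (H t) v := Finset.sum_le_sum hall
  rw [ge_iff_le, le_div_iff₀ (by positivity)]
  nlinarith
end

section
/- Geometric shrinkage of threshold peeling. Let V be a finite type and f : Finset V → V → ℝ with f S v ≥ 0 for all S, v. Let ε ≥ 0 and β > 0 be reals. Let A be a nonempty finset of V with ρ(A) < β, where ρ(A) = (∑_{v ∈ A} f A v) / (2 * A.card), and let B = A.filter (fun v => f A v ≥ 2(1 + ε)β). Then (1 + ε) · B.card < A.card. -/
open scoped Classical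

/-- Geometric shrinkage of threshold peeling: if a nonempty finset `A` has
generalized density `ρ(A) < β`, then the set `B` of vertices of `A` whose
generalized degree is at least `2(1+ε)β` satisfies `(1+ε)·|B| < |A|`. -/
theorem threshold_peeling_shrinkage
    {V : Type*} [Fintype V]
    (f : Finset V → V → ℝ)
    (hnonneg : ∀ (S : Finset V) (v : V), 0 ≤ f S v)
    (ε : ℝ) (hε : 0 ≤ ε) (β : ℝ) (hβ : 0 < β)
    (A : Finset V) (hA : A.Nonempty)
    (hdens : (∑ v ∈ A, f A v) / (2 * A.card) < β)
    (B : Finset V)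
    (hB : B = A.filter (fun v => f A v ≥ 2 * (1 + ε) * β)) :
    (1 + ε) * B.card < A.card := by
  have hcard : (0 : ℝ) < A.card := by
    exact_mod_cast Finset.card_pos.mpr hA
  have hsum : (∑ v ∈ A, f A v) < β * (2 * A.card) := by
    have := (div_lt_iff₀ (by positivity)).mp hdens
    linarith
  have hBsub : B ⊆ A := by rw [hB]; exact Finset.filter_subset _ _
  have h1 : (B.card : ℝ) * (2 * (1 + ε) * β) ≤ ∑ v ∈ B, f A v := by
    have := Finset.card_nsmul_le_sum B (f A) (2 * (1 + ε) * β) (fun v hv => by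
      rw [hB] at hv; exact (Finset.mem_filter.mp hv).2)
    simpa [nsmul_eq_mul] using this
  have h2 : (∑ v ∈ B, f A v) ≤ ∑ v ∈ A, f A v :=
    Finset.sum_le_sum_of_subset_of_nonneg hBsub (fun v _ _ => hnonneg A v)
  nlinarith [hnonneg A, h1, h2]
end

section
/- Any collection of k disjoint intervals can be extended to a partition of the timeline without decreasing the total score. Let r ≥ 1, k ≥ 1 be naturals and let d : ℕ → ℕ → ℝ be an interval score function that is non-negative and monotone under interval inclusion: if a' ≤ a ≤ b ≤ b' then d a b ≤ d a' b'. Let a, b : Fin k → ℕ define k pairwise disjoint nonempty intervals in order: 1 ≤ a 0, a j ≤ b j for all j, b j < a (j+1) for j+1 < k, and b (k−1) ≤ r. Then there exists a non-decreasing sequence of boundaries c : Fin (k+1) → ℕ with c 0 = 0 and c k = r such that c (j) + 1 ≤ a (j) and b (j) ≤ c (j+1) for every j, and ∑_{j} d (c j + 1) (c (j+1)) ≥ ∑_{j} d (a j) (b j). -/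
private def segC (r k : ℕ) (b : Fin k → ℕ) (j : Fin (k + 1)) : ℕ :=
  if h0 : (j : ℕ) = 0 then 0
  else if hk : (j : ℕ) = k then r
  else b ⟨(j : ℕ) - 1, by omega⟩

private lemma segC_zero (r k : ℕ) (b : Fin k → ℕ) (j : Fin (k + 1))
    (h : (j : ℕ) = 0) : segC r k b j = 0 := by
  simp [segC, h]

private lemma segC_last (r k : ℕ) (b : Fin k → ℕ) (j : Fin (k + 1))
    (hk : 1 ≤ k) (h : (j : ℕ) = k) : segC r k b j = r := by
  have h0 : (j : ℕ) ≠ 0 := by omega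
  simp [segC, h0, h]
  omega

private lemma segC_mid (r k : ℕ) (b : Fin k → ℕ) (j : Fin (k + 1))
    (h0 : (j : ℕ) ≠ 0) (hk : (j : ℕ) ≠ k) :
    segC r k b j = b ⟨(j : ℕ) - 1, by omega⟩ := by
  simp [segC, h0, hk]

/-- Any collection of `k` disjoint intervals inside `{1,…,r}` can be extended
to a full `k`-segmentation of the timeline without decreasing the total score,
when the interval score `d` is non-negative and monotone under interval
inclusion. -/
theorem disjoint_intervals_extend_to_segmentation
    (r k : ℕ) (hr : 1 ≤ r) (hk : 1 ≤ k)
    (d : ℕ → ℕ → ℝ)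
    (hd0 : ∀ a b : ℕ, 0 ≤ d a b)
    (hdmono : ∀ a' a b b' : ℕ, a' ≤ a → a ≤ b → b ≤ b' → d a b ≤ d a' b')
    (a b : Fin k → ℕ)
    (ha0 : 1 ≤ a ⟨0, by omega⟩)
    (hab : ∀ j : Fin k, a j ≤ b j)
    (hgap : ∀ j : Fin k, ∀ (h : (j : ℕ) + 1 < k), b j < a ⟨(j : ℕ) + 1, h⟩)
    (hbr : b ⟨k - 1, by omega⟩ ≤ r) :
    ∃ c : Fin (k + 1) → ℕ,
      Monotone c ∧ c 0 = 0 ∧ c (Fin.last k) = r ∧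
      (∀ j : Fin k, c j.castSucc + 1 ≤ a j ∧ b j ≤ c j.succ) ∧
      (∑ j : Fin k, d (c j.castSucc + 1) (c j.succ)) ≥ ∑ j : Fin k, d (a j) (b j) := by
  -- b is monotone along indices
  have hbmono : ∀ (i j : ℕ) (hi : i < k) (hj : j < k), i ≤ j →
      b ⟨i, hi⟩ ≤ b ⟨j, hj⟩ := by
    intro i j hi hj hij
    induction j with
    | zero =>
      have : i = 0 := by omega
      subst this; rfl
    | succ n ih =>
      rcases Nat.lt_or_ge i (n + 1) with h' | h'
      · have hn : n < k := by omega
        have h1 : b ⟨i, hi⟩ ≤ b ⟨n, hn⟩ := ih hn (by omega)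
        have h2 : b ⟨n, hn⟩ < a ⟨n + 1, hj⟩ := hgap ⟨n, hn⟩ hj
        have h3 : a ⟨n + 1, hj⟩ ≤ b ⟨n + 1, hj⟩ := hab _
        omega
      · have : i = n + 1 := by omega
        subst this; rfl
  -- key lower bound: segC at a step interval contains [a j, b j]
  have hleft : ∀ j : Fin k, segC r k b j.castSucc + 1 ≤ a j := by
    intro j
    have hc : ((j.castSucc : Fin (k + 1)) : ℕ) = (j : ℕ) := rfl
    by_cases h0 : (j : ℕ) = 0
    · have hj : j = ⟨0, by omega⟩ := by ext; exact h0
      rw [hj, segC_zero r k b _ rfl]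
      exact ha0
    · have hck : (j : ℕ) ≠ k := by have := j.isLt; omega
      have hj1 : (j : ℕ) - 1 < k := by have := j.isLt; omega
      have hmid : segC r k b j.castSucc = b ⟨(j : ℕ) - 1, hj1⟩ :=
        segC_mid r k b j.castSucc (by omega) (by rw [hc]; exact hck)
      have hg := hgap ⟨(j : ℕ) - 1, hj1⟩ (by simp only [Fin.val_mk]; omega)
      have haeq : a ⟨(j : ℕ) - 1 + 1, by omega⟩ = a j := by
        congr 1; ext; simp only [Fin.val_mk]; omega
      rw [haeq] at hg
      omega
  have hright : ∀ j : Fin k, b j ≤ segC r k b j.succ := by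
    intro j
    have hs : ((j.succ : Fin (k + 1)) : ℕ) = (j : ℕ) + 1 := rfl
    by_cases hck : (j : ℕ) + 1 = k
    · have := segC_last r k b j.succ hk (by omega)
      have hb := hbmono (j : ℕ) (k - 1) j.isLt (by omega) (by omega)
      simp only [Fin.eta] at hb
      omega
    · have hmid : segC r k b j.succ = b j :=
        segC_mid r k b j.succ (by omega) (by rw [hs]; exact hck)
      exact hmid.symm.le
  refine ⟨segC r k b, ?_, ?_, ?_, fun j => ⟨hleft j, hright j⟩, ?_⟩
  · -- Monotone
    intro i j hij
    have hij' : (i : ℕ) ≤ (j : ℕ) := hij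
    rcases Nat.eq_or_lt_of_le hij' with h | h
    · have : i = j := by ext; exact h
      rw [this]
    by_cases h0 : (i : ℕ) = 0
    · rw [segC_zero r k b i h0]; exact Nat.zero_le _
    by_cases hik : (i : ℕ) = k
    · omega
    rw [segC_mid r k b i h0 hik]
    by_cases hjk : (j : ℕ) = k
    · rw [segC_last r k b j hk hjk]
      have := hbmono ((i : ℕ) - 1) (k - 1) (by omega) (by omega) (by omega)
      omega
    · rw [segC_mid r k b j (by omega) hjk]
      exact hbmono _ _ _ _ (by omega)
  · exact segC_zero r k b 0 rfl
  · exact segC_last r k b (Fin.last k) hk rfl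
  · apply Finset.sum_le_sum
    intro j _
    exact hdmono _ _ _ _ (by have := hleft j; omega) (hab j) (hright j)
end
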